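/- Over an algebraically closed field F, for α, β ∈ F the algebras E^α_{5,23} : e₁² = e₃ + e₄, e₂² = e₃ + α e₅, e₃² = e₄, e₄² = e₅ and E^β_{5,23} are isomorphic if and only if α = β. -/

import Mathlib

/-!
An isomorphism `σ : E^α → E^β` preserves the annihilator series, which in `E^α` is
`⟨e₅⟩ ⊂ ⟨e₄, e₅⟩ ⊂ ⟨e₃, e₄, e₅⟩`. So the images of `e₃, e₄, e₅` have vanishing leading
coordinates, and the multiplication table of `E^α`, transported by `σ`, then pins down enough
coordinates of the images of the basis: `σ e₃` has `e₃`-coordinate `1` and `e₅`-coordinate `0`,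
`σ e₅` has `e₅`-coordinate `1`, and `σ e₂` is `±e₂` modulo `⟨e₅⟩`. The `e₅`-coordinate of
`σ(e₂²) = σ e₃ + α σ e₅` then reads `β = α`. Coordinate `i : Fin 5` is the `eᵢ₊₁`-coordinate.
-/

/-- Multiplication of `E₅,₂₃^α : e₁² = e₃ + e₄, e₂² = e₃ + α e₅, e₃² = e₄, e₄² = e₅`
on `F⁵` (all other products of natural basis vectors are zero). -/
def mulE523 {F : Type*} [Field F] (α : F) :
    (Fin 5 → F) → (Fin 5 → F) → (Fin 5 → F) :=
  fun x y => ![0, 0, x 0 * y 0 + x 1 * y 1, x 0 * y 0 + x 2 * y 2,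
    α * (x 1 * y 1) + x 3 * y 3]

open Function

def annihilatorSeries {V : Type*} [Zero V] (m : V → V → V) : ℕ → Set V
  | 0 => {0}
  | k + 1 => {x | ∀ z, m x z ∈ annihilatorSeries m k}

theorem mem_annihilatorSeries_succ {V : Type*} [Zero V] {m : V → V → V} {k : ℕ} {x : V} :
    x ∈ annihilatorSeries m (k + 1) ↔ ∀ z, m x z ∈ annihilatorSeries m k :=
  Iff.rfl

theorem map_mem_annihilatorSeries {V W : Type*} [Zero V] [Zero W] {m : V → V → V}
    {m' : W → W → W} {f : V → W} (hf : Surjective f) (hf0 : f 0 = 0)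
    (hmul : ∀ x y, f (m x y) = m' (f x) (f y)) :
    ∀ {k : ℕ} {x : V}, x ∈ annihilatorSeries m k → f x ∈ annihilatorSeries m' k
  | 0, x, hx => by rw [Set.mem_singleton_iff.mp hx]; exact hf0
  | k + 1, x, hx => fun w => by
    obtain ⟨z, rfl⟩ := hf w
    rw [← hmul]
    exact map_mem_annihilatorSeries hf hf0 hmul (hx z)

section E523

variable {F : Type*} [Field F] {α : F} {x y : Fin 5 → F}

@[simp] theorem mulE523_apply_zero : mulE523 α x y 0 = 0 := rfl
@[simp] theorem mulE523_apply_one : mulE523 α x y 1 = 0 := rfl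
@[simp] theorem mulE523_apply_two : mulE523 α x y 2 = x 0 * y 0 + x 1 * y 1 := rfl
@[simp] theorem mulE523_apply_three : mulE523 α x y 3 = x 0 * y 0 + x 2 * y 2 := rfl
@[simp] theorem mulE523_apply_four : mulE523 α x y 4 = α * (x 1 * y 1) + x 3 * y 3 := rfl

theorem mulE523_eq_zero_iff : mulE523 α x y = 0 ↔
    x 0 * y 0 + x 1 * y 1 = 0 ∧ x 0 * y 0 + x 2 * y 2 = 0 ∧ α * (x 1 * y 1) + x 3 * y 3 = 0 := by
  simp [funext_iff, Fin.forall_fin_succ]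

theorem mem_annihilatorSeries_mulE523_one :
    x ∈ annihilatorSeries (mulE523 α) 1 ↔ x 0 = 0 ∧ x 1 = 0 ∧ x 2 = 0 ∧ x 3 = 0 := by
  simp only [annihilatorSeries, Set.mem_singleton_iff, mulE523_eq_zero_iff]
  refine ⟨fun h => ?_, ?_⟩
  · have h0 := (h (Pi.single 0 1)).1
    have h1 := (h (Pi.single 1 1)).1
    have h2 := (h (Pi.single 2 1)).2.1
    have h3 := (h (Pi.single 3 1)).2.2
    simp_all
  · rintro ⟨h0, h1, h2, h3⟩ z
    simp [h0, h1, h2, h3]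

theorem mem_annihilatorSeries_mulE523_two :
    x ∈ annihilatorSeries (mulE523 α) 2 ↔ x 0 = 0 ∧ x 1 = 0 ∧ x 2 = 0 := by
  simp only [mem_annihilatorSeries_succ (k := 1), mem_annihilatorSeries_mulE523_one,
    mulE523_apply_zero, mulE523_apply_one, mulE523_apply_two, mulE523_apply_three, true_and]
  refine ⟨fun h => ?_, ?_⟩
  · have h0 := (h (Pi.single 0 1)).1
    have h1 := (h (Pi.single 1 1)).1
    have h2 := (h (Pi.single 2 1)).2
    simp_all
  · rintro ⟨h0, h1, h2⟩ z
    simp [h0, h1, h2]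

theorem mem_annihilatorSeries_mulE523_three :
    x ∈ annihilatorSeries (mulE523 α) 3 ↔ x 0 = 0 ∧ x 1 = 0 := by
  simp only [mem_annihilatorSeries_succ (k := 2), mem_annihilatorSeries_mulE523_two,
    mulE523_apply_zero, mulE523_apply_one, mulE523_apply_two, true_and]
  refine ⟨fun h => ?_, ?_⟩
  · have h0 := h (Pi.single 0 1)
    have h1 := h (Pi.single 1 1)
    simp_all
  · rintro ⟨h0, h1⟩ z
    simp [h0, h1]

theorem eq_of_mulE523_relations {β : F} {a b c d e : Fin 5 → F}
    (hc0 : c 0 = 0) (hc1 : c 1 = 0) (hd1 : d 1 = 0) (hd2 : d 2 = 0) (he0 : e 0 = 0)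
    (he1 : e 1 = 0) (he2 : e 2 = 0) (he3 : e 3 = 0) (he : e ≠ 0)
    (haa : mulE523 β a a = c + d) (hbb : mulE523 β b b = c + α • e)
    (hcc : mulE523 β c c = d) (hdd : mulE523 β d d = e) (hab : mulE523 β a b = 0)
    (hac : mulE523 β a c = 0) (hbc : mulE523 β b c = 0) (had : mulE523 β a d = 0)
    (hbd : mulE523 β b d = 0) (hcd : mulE523 β c d = 0) : α = β := by
  have he4 : e 4 ≠ 0 := fun he4 => he (by ext i; fin_cases i <;> assumption)
  have hd3 : d 3 * d 3 = e 4 := by simpa [hd1] using congrFun hdd 4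
  have hc2 : c 2 * c 2 = d 3 := by simpa [hc0] using congrFun hcc 3
  have hd4 : c 3 * c 3 = d 4 := by simpa [hc1] using congrFun hcc 4
  have hd3_ne : d 3 ≠ 0 := by rintro h; apply he4; rw [← hd3, h, zero_mul]
  have hc2_ne : c 2 ≠ 0 := by rintro h; apply hd3_ne; rw [← hc2, h, zero_mul]
  have hc3 : c 3 = 0 := by simpa [hc1, hd3_ne] using congrFun hcd 4
  have ha2 : a 2 = 0 := by simpa [hc0, hc2_ne] using congrFun hac 3
  have hb2 : b 2 = 0 := by simpa [hc0, hc2_ne] using congrFun hbc 3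
  have ha3 : a 3 = 0 := by simpa [hd1, hd3_ne] using congrFun had 4
  have hb3 : b 3 = 0 := by simpa [hd1, hd3_ne] using congrFun hbd 4
  have hb0 : b 0 = 0 := by simpa [hc3, he3, hb2] using congrFun hbb 3
  have hb1 : b 1 * b 1 = c 2 := by simpa [hb0, he2] using congrFun hbb 2
  have ha1 : a 1 = 0 := by
    have hb1_ne : b 1 ≠ 0 := by rintro h; apply hc2_ne; rw [← hb1, h, zero_mul]
    simpa [hb0, hb1_ne] using congrFun hab 2
  have hc2_eq : c 2 = 1 := by
    have h2 : a 0 * a 0 = c 2 := by simpa [ha1, hd2] using congrFun haa 2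
    have h3 : a 0 * a 0 = d 3 := by simpa [ha2, hc3] using congrFun haa 3
    have h : c 2 * c 2 = c 2 * 1 := by rw [mul_one, hc2, ← h3, h2]
    exact mul_left_cancel₀ hc2_ne h
  have hc4 : c 4 = 0 := by simpa [ha1, ha3, ← hd4, hc3] using (congrFun haa 4).symm
  have h4 : β * (b 1 * b 1) = c 4 + α * e 4 := by simpa [hb3] using congrFun hbb 4
  rw [hb1, hc4, ← hd3, ← hc2, hc2_eq] at h4
  simpa using h4.symm

theorem eq_of_linearEquiv_mulE523 {β : F} (σ : (Fin 5 → F) ≃ₗ[F] (Fin 5 → F))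
    (hσ : ∀ x y, σ (mulE523 α x y) = mulE523 β (σ x) (σ y)) : α = β := by
  have map_mem {k x} (hx : x ∈ annihilatorSeries (mulE523 α) k) :
      σ x ∈ annihilatorSeries (mulE523 β) k :=
    map_mem_annihilatorSeries σ.surjective (map_zero σ) hσ hx
  have map_prod {x y} (z : Fin 5 → F) (h : mulE523 α x y = z) : mulE523 β (σ x) (σ y) = σ z :=
    (hσ x y).symm.trans (congrArg σ h)
  obtain ⟨hc0, hc1⟩ := mem_annihilatorSeries_mulE523_three.mp
    (map_mem (x := Pi.single 2 1) (mem_annihilatorSeries_mulE523_three.mpr (by simp)))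
  obtain ⟨-, hd1, hd2⟩ := mem_annihilatorSeries_mulE523_two.mp
    (map_mem (x := Pi.single 3 1) (mem_annihilatorSeries_mulE523_two.mpr (by simp)))
  obtain ⟨he0, he1, he2, he3⟩ := mem_annihilatorSeries_mulE523_one.mp
    (map_mem (x := Pi.single 4 1) (mem_annihilatorSeries_mulE523_one.mpr (by simp)))
  have map_zero_prod {x y} (h : mulE523 α x y = 0) : mulE523 β (σ x) (σ y) = 0 :=
    (map_prod 0 h).trans (map_zero σ)
  refine eq_of_mulE523_relations (a := σ (Pi.single 0 1)) (b := σ (Pi.single 1 1))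
    hc0 hc1 hd1 hd2 he0 he1 he2 he3 (by simp) ?_ ?_ ?_ ?_ ?_ ?_ ?_ ?_ ?_ ?_
  · rw [← map_add]; exact map_prod _ (by ext i; fin_cases i <;> simp)
  · rw [← map_smul, ← map_add]; exact map_prod _ (by ext i; fin_cases i <;> simp)
  iterate 2 exact map_prod _ (by ext i; fin_cases i <;> simp)
  all_goals exact map_zero_prod (by ext i; fin_cases i <;> simp)

end E523

theorem stmt17_general {F : Type*} [Field F] (α β : F) :
    (∃ σ : (Fin 5 → F) ≃ₗ[F] (Fin 5 → F),
        ∀ x y, σ (mulE523 α x y) = mulE523 β (σ x) (σ y)) ↔ α = β := by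
  refine ⟨fun ⟨σ, hσ⟩ => eq_of_linearEquiv_mulE523 σ hσ, ?_⟩
  rintro rfl
  exact ⟨LinearEquiv.refl F _, fun _ _ => rfl⟩

/-- Over an algebraically closed field `F`, for `α, β ∈ F` the algebras
`E₅,₂₃^α` and `E₅,₂₃^β` are isomorphic if and only if `α = β`. -/
theorem stmt17 {F : Type*} [Field F] [IsAlgClosed F] (α β : F) :
    (∃ σ : (Fin 5 → F) ≃ₗ[F] (Fin 5 → F),
        ∀ x y, σ (mulE523 α x y) = mulE523 β (σ x) (σ y)) ↔ α = β :=
  stmt17_general α β
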